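/- For every T > 0 and all x, y ∈ ℝ with x + y ≠ 0 one has (tanh(x/T) + tanh(y/T))/(x + y) < 2/(|x| + |y|). -/

import Mathlib

/-!
Substituting `u = x / T`, `v = y / T` and using that `tanh` is odd, one may assume `T = 1` and
`s = u + v > 0`. With `d = u - v` the addition formulas give
`tanh u + tanh v = 2 sinh s / (cosh s + cosh d)`, while `|u| + |v| = max s |d| =: m`, so the claim
becomes `m sinh s < s (cosh s + cosh d)`. Since `sinh` is convex on `[0, ∞)` and vanishes at `0`,
`sinh t / t` is nondecreasing there, whence `m sinh s ≤ s sinh m < s cosh m ≤ s (cosh s + cosh d)`.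
-/
open Real Set

theorem convexOn_sinh_Ici : ConvexOn ℝ (Ici 0) sinh := by
  refine MonotoneOn.convexOn_of_deriv (convex_Ici 0) continuous_sinh.continuousOn
    differentiable_sinh.differentiableOn ?_
  rw [Real.deriv_sinh, interior_Ici]
  intro x hx y hy hxy
  exact cosh_le_cosh.2 (by rwa [abs_of_pos hx, abs_of_pos hy])

theorem mul_sinh_le_mul_sinh {a b : ℝ} (ha : 0 < a) (hab : a ≤ b) :
    b * sinh a ≤ a * sinh b := by
  have hb : 0 < b := ha.trans_le hab
  have h := convexOn_sinh_Ici.secant_mono self_mem_Ici ha.le hb.le ha.ne' hb.ne' hab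
  simp only [sinh_zero, sub_zero] at h
  rw [div_le_div_iff₀ ha hb] at h
  linarith

theorem max_mul_sinh_lt {s : ℝ} (hs : 0 < s) (d : ℝ) :
    max s |d| * sinh s < s * (cosh s + cosh d) := by
  set m := max s |d|
  have hcosh_m : cosh m ≤ cosh s + cosh d := by
    rcases max_choice s |d| with h | h <;> simp only [m, h, cosh_abs] <;>
      linarith [cosh_pos s, cosh_pos d]
  calc m * sinh s ≤ s * sinh m := mul_sinh_le_mul_sinh hs (le_max_left _ _)
    _ < s * cosh m := mul_lt_mul_of_pos_left (sinh_lt_cosh m) hs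
    _ ≤ s * (cosh s + cosh d) := mul_le_mul_of_nonneg_left hcosh_m hs.le

theorem tanh_add_tanh (u v : ℝ) :
    tanh u + tanh v = 2 * sinh (u + v) / (cosh (u + v) + cosh (u - v)) := by
  have hu := (cosh_pos u).ne'
  have hv := (cosh_pos v).ne'
  rw [tanh_eq_sinh_div_cosh, tanh_eq_sinh_div_cosh, sinh_add, cosh_add, cosh_sub]
  field_simp
  ring

theorem abs_add_abs_eq_max (u v : ℝ) : |u| + |v| = max |u + v| |u - v| := by
  grind [abs_of_nonneg, abs_of_nonpos]

theorem tanh_add_tanh_div_lt_of_pos {u v : ℝ} (huv : 0 < u + v) :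
    (tanh u + tanh v) / (u + v) < 2 / (|u| + |v|) := by
  have hM : 0 < |u| + |v| := huv.trans_le ((le_abs_self _).trans (abs_add_le u v))
  have hC : 0 < cosh (u + v) + cosh (u - v) := by positivity
  rw [tanh_add_tanh, div_div, div_lt_div_iff₀ (mul_pos hC huv) hM, abs_add_abs_eq_max,
    abs_of_pos huv]
  linarith [max_mul_sinh_lt huv (u - v)]

theorem tanh_add_tanh_div_lt {u v : ℝ} (huv : u + v ≠ 0) :
    (tanh u + tanh v) / (u + v) < 2 / (|u| + |v|) := by
  rcases huv.lt_or_gt with hneg | hpos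
  · have h := tanh_add_tanh_div_lt_of_pos (u := -u) (v := -v) (by linarith)
    rwa [tanh_neg, tanh_neg, abs_neg, abs_neg, ← neg_add, ← neg_add, neg_div_neg_eq] at h
  · exact tanh_add_tanh_div_lt_of_pos hpos

theorem tanh_sum_div_lt (T : ℝ) (hT : 0 < T) (x y : ℝ) (hxy : x + y ≠ 0) :
    (Real.tanh (x / T) + Real.tanh (y / T)) / (x + y) < 2 / (|x| + |y|) := by
  have h := tanh_add_tanh_div_lt (u := x / T) (v := y / T)
    (by rw [← add_div]; exact div_ne_zero hxy hT.ne')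
  rwa [abs_div, abs_div, abs_of_pos hT, ← add_div, ← add_div, div_div_eq_mul_div,
    div_div_eq_mul_div, mul_div_right_comm, mul_div_right_comm, mul_lt_mul_iff_left₀ hT] at h
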